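/- Let G be a Monge DAG on {s,...,N}, λ ∈ ℝ, and (m,n) with n ∈ {s+1,...,N}, 1 ≤ m ≤ n-s. With f, δ, G(λ) as before and d_max(λ,n) the greatest link count among shortest s-n paths in G(λ): d_max(λ,n) ≥ m if and only if λ ≥ δ(m-1,n). -/

import Mathlib

/-!
Splicing an optimal `k`-link path with an optimal `(k + 2)`-link path at the first place where
they cross yields two `(k + 1)`-link paths, and the Monge inequality at the crossing shows that
their total length is at most that of the original pair. Hence `k ↦ f k n` is discretely convex,
and for a convex sequence the largest minimiser of `f k n - k * λ` reaches `m` exactly when the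
increment `f m n - f (m - 1) n` is at most `λ`.
-/

/-- A Monge (submodular) edge-length function on the complete DAG on `{s,...,N}`. -/
def IsMonge (s N : ℕ) (c : ℕ → ℕ → ℝ) : Prop :=
  ∀ i₁ i₂ j₂ j₁ : ℕ, s ≤ i₁ → i₁ < i₂ → i₂ < j₂ → j₂ < j₁ → j₁ ≤ N →
    c i₁ j₂ + c i₂ j₁ ≤ c i₁ j₁ + c i₂ j₂

/-- `v 0, v 1, ..., v m` is an `m`-link path from `a` to `b` inside `{s,...,N}`. -/
def IsPath (s N a b m : ℕ) (v : ℕ → ℕ) : Prop :=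
  v 0 = a ∧ v m = b ∧ (∀ k < m, v k < v (k + 1)) ∧ s ≤ a ∧ b ≤ N

/-- The length of the `m`-link path `v 0, ..., v m` under edge lengths `c`. -/
def pathLen (c : ℕ → ℕ → ℝ) (m : ℕ) (v : ℕ → ℕ) : ℝ :=
  ∑ k ∈ Finset.range m, c (v k) (v (k + 1))

/-- The set of lengths of `m`-link `a`-`b` paths in the complete DAG on `{s,...,N}`. -/
def pathLens (s N a b m : ℕ) (c : ℕ → ℕ → ℝ) : Set ℝ :=
  {x | ∃ v, IsPath s N a b m v ∧ pathLen c m v = x}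

/-- The set of link counts of shortest `s`-`n` paths in `G(lam)`
    (the graph with `lam` subtracted from every edge length). -/
def DSet (s N n : ℕ) (c : ℕ → ℕ → ℝ) (lam : ℝ) : Set ℕ :=
  {m | ∃ v, IsPath s N s n m v ∧
    ∀ m' w, IsPath s N s n m' w →
      pathLen c m v - m * lam ≤ pathLen c m' w - m' * lam}

/-- The set of lengths of all `s`-`n` paths (any number of links). -/
def allLens (s N n : ℕ) (c : ℕ → ℕ → ℝ) : Set ℝ :=
  {x | ∃ m v, IsPath s N s n m v ∧ pathLen c m v = x}

open Finset

namespace IsPath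

variable {s N a b m : ℕ} {v : ℕ → ℕ}

lemma add_le_apply_add (h : IsPath s N a b m v) {i d : ℕ} (hid : i + d ≤ m) :
    v i + d ≤ v (i + d) := by
  induction d with
  | zero => simp
  | succ d ih =>
    have hstep := h.2.2.1 (i + d) (by omega)
    have := ih (by omega)
    rw [show i + (d + 1) = i + d + 1 by omega]
    omega

lemma start_add_le (h : IsPath s N a b m v) : a + m ≤ b := by
  simpa [h.1, h.2.1] using h.add_le_apply_add (i := 0) (d := m) (by omega)

lemma start_le (h : IsPath s N a b m v) {j : ℕ} (hj : j ≤ m) : a ≤ v j := by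
  have := h.add_le_apply_add (i := 0) (d := j) (by omega)
  rw [Nat.zero_add, h.1] at this
  omega

lemma le_end (h : IsPath s N a b m v) {j : ℕ} (hj : j ≤ m) : v j ≤ b := by
  have := h.add_le_apply_add (i := j) (d := m - j) (by omega)
  rw [Nat.add_sub_cancel' hj, h.2.1] at this
  omega

lemma mem_Icc (h : IsPath s N a b m v) (hab : a < b) : m ∈ Set.Icc 1 (b - a) := by
  have := h.start_add_le
  refine ⟨Nat.one_le_iff_ne_zero.2 fun hm => ?_, by omega⟩
  subst hm
  have := h.1.symm.trans h.2.1
  omega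

end IsPath

def splice (v w : ℕ → ℕ) (i j : ℕ) : ℕ → ℕ :=
  fun l => if l ≤ i then v l else w (j + (l - (i + 1)))

lemma splice_self (v : ℕ → ℕ) (i : ℕ) : splice v v i (i + 1) = v := by
  funext l
  unfold splice
  split_ifs
  · rfl
  · congr 1
    omega

lemma pathLen_splice (c : ℕ → ℕ → ℝ) (v w : ℕ → ℕ) (i j r : ℕ) :
    pathLen c (i + 1 + r) (splice v w i j) =
      pathLen c i v + c (v i) (w j) + ∑ l ∈ range r, c (w (j + l)) (w (j + l + 1)) := by
  unfold pathLen
  rw [sum_range_add, sum_range_succ]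
  congr 2
  · refine sum_congr rfl fun l hl => ?_
    have := mem_range.1 hl
    simp only [splice, if_pos this.le, if_pos (show l + 1 ≤ i by omega)]
  · simp [splice]
  · funext l
    simp only [splice, if_neg (show ¬ i + 1 + l ≤ i by omega),
      if_neg (show ¬ i + 1 + l + 1 ≤ i by omega)]
    rw [Nat.add_sub_cancel_left, show i + 1 + l + 1 - (i + 1) = l + 1 by omega, Nat.add_assoc]

lemma IsPath.splice {s N a b m m' i j r : ℕ} {v w : ℕ → ℕ} (hv : IsPath s N a b m v)
    (hw : IsPath s N a b m' w) (hi : i ≤ m) (hjr : j + r = m') (hvw : v i < w j) :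
    IsPath s N a b (i + 1 + r) (splice v w i j) := by
  refine ⟨by simp [_root_.splice, hv.1], ?_, fun l hl => ?_, hv.2.2.2⟩
  · simp only [_root_.splice, if_neg (show ¬ i + 1 + r ≤ i by omega), Nat.add_sub_cancel_left,
      hjr, hw.2.1]
  · unfold _root_.splice
    rcases lt_trichotomy l i with hli | rfl | hil
    · simpa [hli.le, Nat.succ_le_of_lt hli] using hv.2.2.1 l (by omega)
    · simpa using hvw
    · simp only [if_neg (show ¬ l ≤ i by omega), if_neg (show ¬ l + 1 ≤ i by omega)]
      rw [show j + (l + 1 - (i + 1)) = j + (l - (i + 1)) + 1 by omega]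
      exact hw.2.2.1 _ (by omega)

lemma Nat.exists_lt_and_not_succ {P : ℕ → Prop} {n : ℕ} (h0 : P 0) (hn : ¬ P n) :
    ∃ t < n, P t ∧ ¬ P (t + 1) := by
  induction n with
  | zero => exact absurd h0 hn
  | succ n ih =>
    by_cases hPn : P n
    · exact ⟨n, n.lt_succ_self, hPn, hn⟩
    · obtain ⟨t, ht, hPt⟩ := ih hPn
      exact ⟨t, by omega, hPt⟩

lemma IsPath.exists_exchange {s N a b k : ℕ} {c : ℕ → ℕ → ℝ} {p q : ℕ → ℕ}
    (hc : IsMonge s N c) (hp : IsPath s N a b k p) (hq : IsPath s N a b (k + 2) q) :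
    ∃ A B, IsPath s N a b (k + 1) A ∧ IsPath s N a b (k + 1) B ∧
      pathLen c (k + 1) A + pathLen c (k + 1) B ≤ pathLen c k p + pathLen c (k + 2) q := by
  have hqb := hq.start_add_le
  have hstart : p 0 < q 1 := by
    have := hq.2.2.1 0 (by omega)
    rw [hp.1, ← hq.1]
    exact this
  have hend : ¬ p k < q (k + 1) := by
    have := hq.le_end (j := k + 1) (by omega)
    rw [hp.2.1]
    omega
  obtain ⟨t, htk, hpq, hqp⟩ :=
    Nat.exists_lt_and_not_succ (P := fun t => p t < q (t + 1)) hstart hend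
  replace hqp : q (t + 2) ≤ p (t + 1) := not_lt.1 hqp
  obtain ⟨r, rfl⟩ : ∃ r, k = t + 1 + r := ⟨k - (t + 1), by omega⟩
  have hq_step : q (t + 1) < q (t + 2) := hq.2.2.1 _ (by omega)
  -- Swapping the tails of `p` and `q` across `p t < q (t + 1) < q (t + 2) ≤ p (t + 1)`.
  have hA := hp.splice hq (i := t) (j := t + 2) (r := r + 1) (by omega) (by omega) (by omega)
  have hB := hq.splice hp (i := t + 1) (j := t + 1) (r := r) (by omega) (by omega) (by omega)
  rw [show t + 1 + 1 + r = t + 1 + r + 1 by omega] at hB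
  refine ⟨_, _, hA, hB, ?_⟩
  have hmonge : c (p t) (q (t + 2)) + c (q (t + 1)) (p (t + 1)) ≤
      c (p t) (p (t + 1)) + c (q (t + 1)) (q (t + 2)) := by
    rcases hqp.eq_or_lt with heq | hlt
    · rw [heq]
    · refine hc _ _ _ _ ?_ hpq hq_step hlt ?_
      · exact hp.2.2.2.1.trans (hp.start_le (by omega))
      · exact (hp.le_end (by omega)).trans hp.2.2.2.2
  have hlenA := pathLen_splice c p q t (t + 2) (r + 1)
  have hlenB := pathLen_splice c q p (t + 1) (t + 1) r
  have hlenP := pathLen_splice c p p t (t + 1) r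
  have hlenQ := pathLen_splice c q q (t + 1) (t + 2) (r + 1)
  rw [show t + 1 + (r + 1) = t + 1 + r + 1 by omega] at hlenA
  rw [splice_self] at hlenP
  rw [show t + 1 + 1 + r = t + 1 + r + 1 by omega] at hlenB
  rw [splice_self, show t + 1 + 1 + (r + 1) = t + 1 + r + 2 by omega] at hlenQ
  rw [hlenA, hlenB, hlenP, hlenQ]
  linarith

lemma monotoneOn_sub_of_isLeast_pathLens {s N a b : ℕ} {c : ℕ → ℕ → ℝ} {g : ℕ → ℝ}
    (hc : IsMonge s N c)
    (hg : ∀ k, 1 ≤ k → a + k ≤ b → IsLeast (pathLens s N a b k c) (g k)) :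
    MonotoneOn (fun k => g (k + 1) - g k) (Set.Ico 1 (b - a)) := by
  refine monotoneOn_of_le_add_one Set.ordConnected_Ico fun k _ hk hk1 => ?_
  simp only [Set.mem_Ico] at hk hk1
  obtain ⟨p, hp, hpl⟩ := (hg k hk.1 (by omega)).1
  obtain ⟨q, hq, hql⟩ := (hg (k + 2) (by omega) (by omega)).1
  obtain ⟨A, B, hA, hB, hAB⟩ := hp.exists_exchange hc hq
  have hgA := (hg (k + 1) (by omega) (by omega)).2 ⟨A, hA, rfl⟩
  have hgB := (hg (k + 1) (by omega) (by omega)).2 ⟨B, hB, rfl⟩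
  linarith

lemma DSet_eq {s N n : ℕ} {c : ℕ → ℕ → ℝ} {f : ℕ → ℝ} {lam : ℝ}
    (hf : ∀ k, 1 ≤ k → s + k ≤ n → IsLeast (pathLens s N s n k c) (f k)) (hsn : s < n) :
    DSet s N n c lam =
      {k ∈ Set.Icc 1 (n - s) | IsMinOn (fun k : ℕ => f k - k * lam) (Set.Icc 1 (n - s)) k} := by
  have hf' : ∀ k ∈ Set.Icc 1 (n - s), IsLeast (pathLens s N s n k c) (f k) :=
    fun k hk => hf k hk.1 (by have := hk.2; omega)
  ext k
  constructor
  · rintro ⟨v, hv, hopt⟩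
    have hk := hv.mem_Icc hsn
    refine ⟨hk, isMinOn_iff.2 fun k' hk' => ?_⟩
    obtain ⟨w, hw, hwl⟩ := (hf' k' hk').1
    have := (hf' k hk).2 ⟨v, hv, rfl⟩
    linarith [hopt k' w hw]
  · rintro ⟨hk, hmin⟩
    obtain ⟨v, hv, hvl⟩ := (hf' k hk).1
    refine ⟨v, hv, fun k' w hw => ?_⟩
    have hk' := hw.mem_Icc hsn
    have := (hf' k' hk').2 ⟨w, hw, rfl⟩
    linarith [isMinOn_iff.1 hmin k' hk']

section DiscreteConvexity

variable {g : ℕ → ℝ} {L : ℕ}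

lemma mul_sub_le_sub_of_monotoneOn (hg : MonotoneOn (fun k => g (k + 1) - g k) (Set.Ico 1 L))
    {i j : ℕ} (hi : 1 ≤ i) (hij : i ≤ j) (hj : j ≤ L) :
    ((j : ℝ) - i) * (g (i + 1) - g i) ≤ g j - g i := by
  rw [← sum_Ico_sub g hij]
  have := card_nsmul_le_sum (Ico i j) (fun l => g (l + 1) - g l) (g (i + 1) - g i)
    fun l hl => by
      have := mem_Ico.1 hl
      exact hg ⟨hi, by omega⟩ ⟨by omega, by omega⟩ this.1
  simpa [nsmul_eq_mul, Nat.cast_sub hij] using this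

lemma sub_le_mul_sub_of_monotoneOn (hg : MonotoneOn (fun k => g (k + 1) - g k) (Set.Ico 1 L))
    {i j : ℕ} (hi : 1 ≤ i) (hij : i ≤ j) (hj : j < L) :
    g (j + 1) - g i ≤ ((j : ℝ) + 1 - i) * (g (j + 1) - g j) := by
  rw [← sum_Ico_sub g (hij.trans j.le_succ)]
  have := sum_le_card_nsmul (Ico i (j + 1)) (fun l => g (l + 1) - g l) (g (j + 1) - g j)
    fun l hl => by
      have := mem_Ico.1 hl
      exact hg ⟨by omega, by omega⟩ ⟨by omega, hj⟩ (by omega)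
  simpa [nsmul_eq_mul, Nat.cast_sub (hij.trans j.le_succ)] using this

theorem succ_le_iff_of_isGreatest_argmin
    (hg : MonotoneOn (fun k => g (k + 1) - g k) (Set.Ico 1 L)) {lam : ℝ} {d m : ℕ}
    (hd : IsGreatest
      {k ∈ Set.Icc 1 L | IsMinOn (fun k : ℕ => g k - k * lam) (Set.Icc 1 L) k} d)
    (hm : 1 ≤ m) (hmL : m + 1 ≤ L) :
    m + 1 ≤ d ↔ g (m + 1) - g m ≤ lam := by
  obtain ⟨⟨hd1, hdL⟩, hdmin⟩ := hd.1
  rw [isMinOn_iff] at hdmin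
  constructor
  · intro hmd
    have hopt := hdmin m ⟨hm, by omega⟩
    have hconv := mul_sub_le_sub_of_monotoneOn hg hm (by omega) hdL
    have hpos : (0 : ℝ) < d - m := by
      have : (m : ℝ) + 1 ≤ d := by exact_mod_cast hmd
      linarith
    refine le_of_mul_le_mul_left ?_ hpos
    linarith
  · intro hstep
    by_contra! hdm
    have hconv := sub_le_mul_sub_of_monotoneOn hg hd1 (j := m) (by omega) (by omega)
    have hnonneg : (0 : ℝ) ≤ m + 1 - d := by
      have : (d : ℝ) ≤ m := by exact_mod_cast Nat.lt_succ_iff.1 hdm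
      linarith
    refine absurd (hd.2 ⟨⟨by omega, hmL⟩, isMinOn_iff.2 fun k hk => ?_⟩) (by omega)
    have := hdmin k hk
    have := mul_le_mul_of_nonneg_left hstep hnonneg
    push_cast
    linarith

end DiscreteConvexity

theorem stmt11_general (s N n m : ℕ) (c : ℕ → ℕ → ℝ) (hc : IsMonge s N c)
    (f : ℕ → ℕ → ℝ)
    (hf : ∀ k j, 1 ≤ k → s + k ≤ j → j ≤ N → IsLeast (pathLens s N s j k c) (f k j))
    (lam : ℝ) (hn2 : n ≤ N) (hm1 : 1 ≤ m) (hm2 : s + m ≤ n)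
    (dmax : ℕ) (hd : IsGreatest (DSet s N n c lam) dmax) :
    (2 ≤ m → (m ≤ dmax ↔ f m n - f (m - 1) n ≤ lam)) ∧
    (m = 1 → 1 ≤ dmax) := by
  have hfn : ∀ k, 1 ≤ k → s + k ≤ n → IsLeast (pathLens s N s n k c) (f k n) :=
    fun k hk hkn => hf k n hk hkn hn2
  rw [DSet_eq hfn (by omega)] at hd
  refine ⟨fun hm => ?_, fun _ => hd.1.1.1⟩
  obtain ⟨k, rfl⟩ : ∃ k, m = k + 1 := ⟨m - 1, by omega⟩
  simpa using succ_le_iff_of_isGreatest_argmin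
    (monotoneOn_sub_of_isLeast_pathLens hc hfn) hd (by omega) (by omega)

/-- `d_max(lam, n) ≥ m` iff `lam ≥ δ(m-1,n) = f(m,n) - f(m-1,n)`
(with `δ(0,n) = -∞`, i.e. the bound holds unconditionally for `m = 1`). -/
theorem stmt11 (s N n m : ℕ) (c : ℕ → ℕ → ℝ) (hc : IsMonge s N c)
    (f : ℕ → ℕ → ℝ)
    (hf : ∀ k j, 1 ≤ k → s + k ≤ j → j ≤ N → IsLeast (pathLens s N s j k c) (f k j))
    (lam : ℝ) (hn1 : s + 1 ≤ n) (hn2 : n ≤ N) (hm1 : 1 ≤ m) (hm2 : s + m ≤ n)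
    (dmax : ℕ) (hd : IsGreatest (DSet s N n c lam) dmax) :
    (2 ≤ m → (m ≤ dmax ↔ f m n - f (m - 1) n ≤ lam)) ∧
    (m = 1 → 1 ≤ dmax) :=
  stmt11_general s N n m c hc f hf lam hn2 hm1 hm2 dmax hd
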